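/- arXiv:1701.04223 — 6 statements merged into one kernel-verified Lean document; each statement's English description precedes it below -/
import Mathlib

section
/- Let X₁ → X₂ ⊕ Y₂ → X₃ → X₁⟦1⟧ be a distinguished triangle in C whose first map has components f₁ : X₁ → X₂ and g₁ : X₁ → Y₂, and whose second map has components f₂ : X₂ → X₃ and g₂ : Y₂ → X₃. If g₁ = 0, then g₂ is a split monomorphism; more precisely, there exists g₂' : X₃ → Y₂ such that g₂' ∘ g₂ = 1_{Y₂} and g₂' ∘ f₂ = 0. -/
open CategoryTheory CategoryTheory.Limits CategoryTheory.Pretriangulated ZeroObject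

variable {C : Type*} [Category C] [Preadditive C] [HasZeroObject C] [HasBinaryBiproducts C]
  [HasShift C ℤ] [∀ n : ℤ, (shiftFunctor C n).Additive] [Pretriangulated C]

/-- The direct sum of two triangles: the triangle on the biproducts of the corresponding
objects, with the componentwise maps. -/
noncomputable def triangleSum (T T' : Triangle C) : Triangle C :=
  Triangle.mk (biprod.map T.mor₁ T'.mor₁) (biprod.map T.mor₂ T'.mor₂)
    (biprod.desc (T.mor₃ ≫ (biprod.inl : T.obj₁ ⟶ T.obj₁ ⊞ T'.obj₁)⟦(1:ℤ)⟧')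
      (T'.mor₃ ≫ (biprod.inr : T'.obj₁ ⟶ T.obj₁ ⊞ T'.obj₁)⟦(1:ℤ)⟧'))

/-- The mapping cone of a morphism of triangles `φ : T₁ ⟶ T₂`: the triangle with objects
`T₁.obj₂ ⊞ T₂.obj₁`, `T₁.obj₃ ⊞ T₂.obj₂`, `T₁.obj₁⟦1⟧ ⊞ T₂.obj₃` and maps given in matrix
form by `[[-f₂, 0], [φ₂, g₁]]`, `[[-f₃, 0], [φ₃, g₂]]`, `[[-f₁⟦1⟧, 0], [φ₁⟦1⟧, g₃]]`. -/
noncomputable def triangleCone {T₁ T₂ : Triangle C} (φ : T₁ ⟶ T₂) : Triangle C :=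
  Triangle.mk
    (biprod.desc (biprod.lift (-T₁.mor₂) φ.hom₂) (biprod.lift 0 T₂.mor₁))
    (biprod.desc (biprod.lift (-T₁.mor₃) φ.hom₃) (biprod.lift 0 T₂.mor₂))
    (biprod.desc ((biprod.lift (-T₁.mor₁) φ.hom₁ : T₁.obj₁ ⟶ T₁.obj₂ ⊞ T₂.obj₁)⟦(1:ℤ)⟧')
      (T₂.mor₃ ≫ (biprod.inr : T₂.obj₁ ⟶ T₁.obj₂ ⊞ T₂.obj₁)⟦(1:ℤ)⟧'))

/-- A triangle is contractible if its identity morphism is null-homotopic. -/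
def triangleContractible (T : Triangle C) : Prop :=
  ∃ (h₁ : T.obj₂ ⟶ T.obj₁) (h₂ : T.obj₃ ⟶ T.obj₂) (h₃ : T.obj₁⟦(1:ℤ)⟧ ⟶ T.obj₃),
    𝟙 T.obj₂ = h₁ ≫ T.mor₁ + T.mor₂ ≫ h₂ ∧
    𝟙 T.obj₃ = h₂ ≫ T.mor₂ + T.mor₃ ≫ h₃ ∧
    𝟙 (T.obj₁⟦(1:ℤ)⟧) = (T.mor₁ ≫ h₁)⟦(1:ℤ)⟧' + h₃ ≫ T.mor₃

/-- If `X₁ → X₂ ⊞ Y₂ → X₃ → X₁⟦1⟧` is a distinguished triangle whose first map has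
components `f₁, g₁` and second map has components `f₂, g₂`, and `g₁ = 0`, then `g₂` is a
split monomorphism: there is `g₂' : X₃ ⟶ Y₂` with `g₂' ∘ g₂ = 𝟙 Y₂` and `g₂' ∘ f₂ = 0`. -/
theorem stmt0 {X₁ X₂ Y₂ X₃ : C} (f₁ : X₁ ⟶ X₂) (g₁ : X₁ ⟶ Y₂)
    (f₂ : X₂ ⟶ X₃) (g₂ : Y₂ ⟶ X₃) (f₃ : X₃ ⟶ X₁⟦(1:ℤ)⟧)
    (hT : Triangle.mk (biprod.lift f₁ g₁) (biprod.desc f₂ g₂) f₃ ∈ distTriang C)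
    (hg₁ : g₁ = 0) :
    ∃ g₂' : X₃ ⟶ Y₂, g₂ ≫ g₂' = 𝟙 Y₂ ∧ f₂ ≫ g₂' = 0 := by
  subst hg₁
  obtain ⟨g₂', hg₂'⟩ : ∃ g₂' : X₃ ⟶ Y₂, biprod.snd = biprod.desc f₂ g₂ ≫ g₂' :=
    Triangle.yoneda_exact₂ _ hT biprod.snd (biprod.lift_snd f₁ 0)
  refine ⟨g₂', ?_, ?_⟩
  · simpa only [biprod.inr_desc_assoc, biprod.inr_snd] using biprod.inr ≫= hg₂'.symm
  · simpa only [biprod.inl_desc_assoc, biprod.inl_snd] using biprod.inl ≫= hg₂'.symm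
end

section
/- Let X₁ → X₂ ⊕ Y₂ → X₃ → X₁⟦1⟧ be a distinguished triangle in C whose first map has components f₁ : X₁ → X₂ and g₁ : X₁ → Y₂, and whose second map has components f₂ : X₂ → X₃ and g₂ : Y₂ → X₃. If g₁ = 0 or g₂ is a split monomorphism, then there exist an object X₃' and morphisms f₂₁ : X₂ → X₃' and f₃₁ : X₃' → X₁⟦1⟧ such that (X₁, X₂, X₃'; f₁, f₂₁, f₃₁) is a distinguished triangle and the given triangle is isomorphic (as a triangle) to the direct sum of (X₁, X₂, X₃'; f₁, f₂₁, f₃₁) with the triangle (0, Y₂, Y₂; 0, 1_{Y₂}, 0). -/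
/-!
A split monomorphism `g₂` lets one shear `X₂ ⊞ Y₂` so that the second component of the first map
becomes zero, which reduces the split case to the case `g₁ = 0`. In that case, complete `f₁` to a
distinguished triangle; its direct sum with the contractible triangle `0 → Y₂ → Y₂ → 0` is
distinguished (it is isomorphic to a product of distinguished triangles) and has the same first
map as the given triangle, so the two triangles are isomorphic.
-/

open CategoryTheory CategoryTheory.Limits CategoryTheory.Pretriangulated ZeroObject

variable {C : Type*} [Category C] [Preadditive C] [HasZeroObject C] [HasBinaryBiproducts C]
  [HasShift C ℤ] [∀ n : ℤ, (shiftFunctor C n).Additive] [Pretriangulated C]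

namespace CategoryTheory.Pretriangulated

@[simps]
noncomputable def triangleSumFst (T T' : Triangle C) : triangleSum T T' ⟶ T where
  hom₁ := biprod.fst
  hom₂ := biprod.fst
  hom₃ := biprod.fst
  comm₁ := by simp [triangleSum, Triangle.mk]
  comm₂ := by simp [triangleSum, Triangle.mk]
  comm₃ := by apply biprod.hom_ext' <;> simp [triangleSum, Triangle.mk, ← Functor.map_comp]

@[simps]
noncomputable def triangleSumSnd (T T' : Triangle C) : triangleSum T T' ⟶ T' where
  hom₁ := biprod.snd
  hom₂ := biprod.snd
  hom₃ := biprod.snd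
  comm₁ := by simp [triangleSum, Triangle.mk]
  comm₂ := by simp [triangleSum, Triangle.mk]
  comm₃ := by apply biprod.hom_ext' <;> simp [triangleSum, Triangle.mk, ← Functor.map_comp]

lemma isIso_pi_lift_biprod_fst_snd {D : Type*} [Category D] [HasZeroMorphisms D]
    {F : WalkingPair → D} [HasProduct F] [HasBinaryBiproduct (F .left) (F .right)]
    (g : ∀ j, F .left ⊞ F .right ⟶ F j) (hl : g .left = biprod.fst) (hr : g .right = biprod.snd) :
    IsIso (Pi.lift g) := by
  refine ⟨biprod.lift (Pi.π F .left) (Pi.π F .right), ?_, ?_⟩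
  · ext <;> simp [hl, hr]
  · ext ⟨_ | _⟩ <;> simp [hl, hr]

lemma triangleSum_distinguished {T T' : Triangle C} (hT : T ∈ distTriang C)
    (hT' : T' ∈ distTriang C) : triangleSum T T' ∈ distTriang C := by
  let φ : triangleSum T T' ⟶ productTriangle (pairFunction T T') :=
    productTriangle.lift _ (WalkingPair.rec (triangleSumFst T T') (triangleSumSnd T T'))
  have : IsIso φ := Triangle.isIso_of_isIsos φ (isIso_pi_lift_biprod_fst_snd _ rfl rfl)
    (isIso_pi_lift_biprod_fst_snd _ rfl rfl) (isIso_pi_lift_biprod_fst_snd _ rfl rfl)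
  exact isomorphic_distinguished _
    (productTriangle_distinguished _ (WalkingPair.rec hT hT')) _ (asIso φ)

lemma exists_iso_triangleSum_of_biprod_lift_zero {X₁ X₂ Y₂ X₃ : C} (f₁ : X₁ ⟶ X₂)
    (f₂ : X₂ ⊞ Y₂ ⟶ X₃) (f₃ : X₃ ⟶ X₁⟦(1:ℤ)⟧)
    (hT : Triangle.mk (biprod.lift f₁ 0) f₂ f₃ ∈ distTriang C) :
    ∃ (X₃' : C) (f₂₁ : X₂ ⟶ X₃') (f₃₁ : X₃' ⟶ X₁⟦(1:ℤ)⟧),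
      (Triangle.mk f₁ f₂₁ f₃₁ ∈ distTriang C) ∧
      Nonempty (Triangle.mk (biprod.lift f₁ 0) f₂ f₃ ≅
        triangleSum (Triangle.mk f₁ f₂₁ f₃₁)
          (Triangle.mk (0 : (0 : C) ⟶ Y₂) (𝟙 Y₂) (0 : Y₂ ⟶ (0 : C)⟦(1:ℤ)⟧))) := by
  obtain ⟨X₃', f₂₁, f₃₁, hS⟩ := distinguished_cocone_triangle f₁
  have hSum := triangleSum_distinguished hS (contractible_distinguished₁ Y₂)
  refine ⟨X₃', f₂₁, f₃₁, hS, ⟨isoTriangleOfIso₁₂ _ _ hT hSum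
    (isoBiprodZero (isZero_zero C)) (Iso.refl _) ?_⟩⟩
  apply biprod.hom_ext <;> simp [triangleSum, Triangle.mk, isoBiprodZero]

noncomputable def triangleIsoOfObj₂Iso {D : Type*} [Category D] [HasShift D ℤ] (T : Triangle D)
    {X : D} (u : T.obj₂ ≅ X) {f : T.obj₁ ⟶ X} (hf : T.mor₁ ≫ u.hom = f) :
    T ≅ Triangle.mk f (u.inv ≫ T.mor₂) T.mor₃ :=
  Triangle.isoMk _ _ (Iso.refl _) u (Iso.refl _) (by simp [Triangle.mk, hf]) (by simp [Triangle.mk])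
    (by simp [Triangle.mk])

lemma biprod_lift_comp_unipotentUpper {D : Type*} [Category D] [Preadditive D]
    [HasBinaryBiproducts D] {X₁ X₂ Y₂ X₃ : D} {f₁ : X₁ ⟶ X₂} {g₁ : X₁ ⟶ Y₂}
    {f₂ : X₂ ⟶ X₃} {g₂ : Y₂ ⟶ X₃} {r : X₃ ⟶ Y₂} (hzero : f₁ ≫ f₂ + g₁ ≫ g₂ = 0)
    (hr : g₂ ≫ r = 𝟙 Y₂) :
    biprod.lift f₁ g₁ ≫ (Biprod.unipotentUpper (f₂ ≫ r)).hom = biprod.lift f₁ 0 := by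
  have hg₁ : g₁ = -(f₁ ≫ f₂ ≫ r) := calc
    g₁ = (g₁ ≫ g₂) ≫ r := by rw [Category.assoc, hr, Category.comp_id]
    _ = -(f₁ ≫ f₂ ≫ r) := by rw [eq_neg_of_add_eq_zero_right hzero]; simp
  ext <;> simp [hg₁, Biprod.ofComponents]

end CategoryTheory.Pretriangulated

/-- If `X₁ → X₂ ⊞ Y₂ → X₃ → X₁⟦1⟧` is a distinguished triangle whose first map has
components `f₁, g₁` and second map has components `f₂, g₂`, and `g₁ = 0` or `g₂` is a split
monomorphism, then the triangle is isomorphic to the direct sum of a distinguished triangle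
`(X₁, X₂, X₃'; f₁, f₂₁, f₃₁)` and the triangle `(0, Y₂, Y₂; 0, 𝟙, 0)`. -/
theorem stmt1 {X₁ X₂ Y₂ X₃ : C} (f₁ : X₁ ⟶ X₂) (g₁ : X₁ ⟶ Y₂)
    (f₂ : X₂ ⟶ X₃) (g₂ : Y₂ ⟶ X₃) (f₃ : X₃ ⟶ X₁⟦(1:ℤ)⟧)
    (hT : Triangle.mk (biprod.lift f₁ g₁) (biprod.desc f₂ g₂) f₃ ∈ distTriang C)
    (h : g₁ = 0 ∨ ∃ r : X₃ ⟶ Y₂, g₂ ≫ r = 𝟙 Y₂) :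
    ∃ (X₃' : C) (f₂₁ : X₂ ⟶ X₃') (f₃₁ : X₃' ⟶ X₁⟦(1:ℤ)⟧),
      (Triangle.mk f₁ f₂₁ f₃₁ ∈ distTriang C) ∧
      Nonempty (Triangle.mk (biprod.lift f₁ g₁) (biprod.desc f₂ g₂) f₃ ≅
        triangleSum (Triangle.mk f₁ f₂₁ f₃₁)
          (Triangle.mk (0 : (0 : C) ⟶ Y₂) (𝟙 Y₂) (0 : Y₂ ⟶ (0 : C)⟦(1:ℤ)⟧))) := by
  rcases h with rfl | ⟨r, hr⟩
  · exact exists_iso_triangleSum_of_biprod_lift_zero f₁ _ f₃ hT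
  · have hzero : f₁ ≫ f₂ + g₁ ≫ g₂ = 0 := by
      rw [← biprod.lift_desc]; exact comp_distTriang_mor_zero₁₂ _ hT
    let e := triangleIsoOfObj₂Iso (Triangle.mk (biprod.lift f₁ g₁) (biprod.desc f₂ g₂) f₃)
      (Biprod.unipotentUpper (f₂ ≫ r))
      (biprod_lift_comp_unipotentUpper hzero hr)
    obtain ⟨X₃', f₂₁, f₃₁, hS, ⟨i⟩⟩ := exists_iso_triangleSum_of_biprod_lift_zero f₁ _ f₃
      (isomorphic_distinguished _ hT _ e.symm)
    exact ⟨X₃', f₂₁, f₃₁, hS, ⟨e ≪≫ i⟩⟩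
end

section
/- Let X₁ → X₂ ⊕ Y₂ → X₃ → X₁⟦1⟧ be a distinguished triangle in C whose first map has components f₁ : X₁ → X₂ and g₁ : X₁ → Y₂, and whose second map has components f₂ : X₂ → X₃ and g₂ : Y₂ → X₃. If g₂ = 0, then g₁ is a split epimorphism; more precisely, there exists g₁' : Y₂ → X₁ such that g₁ ∘ g₁' = 1_{Y₂} and f₁ ∘ g₁' = 0. -/
open CategoryTheory CategoryTheory.Limits CategoryTheory.Pretriangulated ZeroObject

variable {C : Type*} [Category C] [Preadditive C] [HasZeroObject C] [HasBinaryBiproducts C]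
  [HasShift C ℤ] [∀ n : ℤ, (shiftFunctor C n).Additive] [Pretriangulated C]

/-- If `X₁ → X₂ ⊞ Y₂ → X₃ → X₁⟦1⟧` is a distinguished triangle whose first map has
components `f₁, g₁` and second map has components `f₂, g₂`, and `g₂ = 0`, then `g₁` is a
split epimorphism: there is `g₁' : Y₂ ⟶ X₁` with `g₁ ∘ g₁' = 𝟙 Y₂` and `f₁ ∘ g₁' = 0`. -/
theorem stmt2 {X₁ X₂ Y₂ X₃ : C} (f₁ : X₁ ⟶ X₂) (g₁ : X₁ ⟶ Y₂)
    (f₂ : X₂ ⟶ X₃) (g₂ : Y₂ ⟶ X₃) (f₃ : X₃ ⟶ X₁⟦(1:ℤ)⟧)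
    (hT : Triangle.mk (biprod.lift f₁ g₁) (biprod.desc f₂ g₂) f₃ ∈ distTriang C)
    (hg₂ : g₂ = 0) :
    ∃ g₁' : Y₂ ⟶ X₁, g₁' ≫ g₁ = 𝟙 Y₂ ∧ g₁' ≫ f₁ = 0 := by
  subst hg₂
  -- `inr` is killed by the second map, so by exactness it factors through the first one.
  obtain ⟨g₁', hg₁'⟩ : ∃ g₁' : Y₂ ⟶ X₁, biprod.inr = g₁' ≫ biprod.lift f₁ g₁ :=
    Triangle.coyoneda_exact₂ _ hT biprod.inr (biprod.inr_desc f₂ 0)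
  exact ⟨g₁', by simpa using hg₁'.symm =≫ biprod.snd, by simpa using hg₁'.symm =≫ biprod.fst⟩
end

section
/- Let X, Y, Z be distinguished triangles in C and let φ = (φ₁, φ₂, φ₃) : X → Y and ψ = (ψ₁, ψ₂, ψ₃) : Y → Z be morphisms of triangles. Then the triple of diagonal maps (φ₂ ⊕ 1_{Z₁}, φ₃ ⊕ 1_{Z₂}, φ₁⟦1⟧ ⊕ 1_{Z₃}) defines a morphism of triangles from the mapping cone C(ψ ∘ φ) to the mapping cone C(ψ). -/
open CategoryTheory CategoryTheory.Limits CategoryTheory.Pretriangulated ZeroObject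

variable {C : Type*} [Category C] [Preadditive C] [HasZeroObject C] [HasBinaryBiproducts C]
  [HasShift C ℤ] [∀ n : ℤ, (shiftFunctor C n).Additive] [Pretriangulated C]

omit [HasZeroObject C] [∀ n : ℤ, (shiftFunctor C n).Additive] [Pretriangulated C] in
lemma biprod_lift_neg_mor₁_comp_map {T₁ T₂ T₃ : Triangle C} (φ : T₁ ⟶ T₂) (ψ : T₂ ⟶ T₃) :
    biprod.lift (-T₁.mor₁) (φ.hom₁ ≫ ψ.hom₁) ≫ biprod.map φ.hom₂ (𝟙 T₃.obj₁) =
      φ.hom₁ ≫ biprod.lift (-T₂.mor₁) ψ.hom₁ := by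
  ext <;> simp [φ.comm₁]

noncomputable def triangleConeCompMap {T₁ T₂ T₃ : Triangle C} (φ : T₁ ⟶ T₂) (ψ : T₂ ⟶ T₃) :
    triangleCone (φ ≫ ψ) ⟶ triangleCone ψ :=
  Triangle.homMk _ _ (biprod.map φ.hom₂ (𝟙 _)) (biprod.map φ.hom₃ (𝟙 _))
    (biprod.map (φ.hom₁⟦(1:ℤ)⟧') (𝟙 _))
    (by dsimp only [triangleCone, Triangle.mk]; ext <;> simp [φ.comm₂])
    (by dsimp only [triangleCone, Triangle.mk]; ext <;> simp [φ.comm₃])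
    (by
      dsimp only [triangleCone, Triangle.mk]
      ext
      · simp [← Functor.map_comp, biprod_lift_neg_mor₁_comp_map]
      · simp [← Functor.map_comp])

theorem stmt4_general {T₁ T₂ T₃ : Triangle C} (φ : T₁ ⟶ T₂) (ψ : T₂ ⟶ T₃) :
    ∃ m : triangleCone (φ ≫ ψ) ⟶ triangleCone ψ,
      m.hom₁ = biprod.map φ.hom₂ (𝟙 T₃.obj₁) ∧
      m.hom₂ = biprod.map φ.hom₃ (𝟙 T₃.obj₂) ∧
      m.hom₃ = biprod.map (φ.hom₁⟦(1:ℤ)⟧') (𝟙 T₃.obj₃) :=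
  ⟨triangleConeCompMap φ ψ, rfl, rfl, rfl⟩

/-- Given morphisms of distinguished triangles `φ : T₁ ⟶ T₂` and `ψ : T₂ ⟶ T₃`, the triple
of diagonal maps `(φ₂ ⊞ 𝟙, φ₃ ⊞ 𝟙, φ₁⟦1⟧ ⊞ 𝟙)` defines a morphism of triangles from the
mapping cone of `ψ ∘ φ` to the mapping cone of `ψ`. -/
theorem stmt4 {T₁ T₂ T₃ : Triangle C} (hT₁ : T₁ ∈ distTriang C) (hT₂ : T₂ ∈ distTriang C)
    (hT₃ : T₃ ∈ distTriang C) (φ : T₁ ⟶ T₂) (ψ : T₂ ⟶ T₃) :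
    ∃ m : triangleCone (φ ≫ ψ) ⟶ triangleCone ψ,
      m.hom₁ = biprod.map φ.hom₂ (𝟙 T₃.obj₁) ∧
      m.hom₂ = biprod.map φ.hom₃ (𝟙 T₃.obj₂) ∧
      m.hom₃ = biprod.map (φ.hom₁⟦(1:ℤ)⟧') (𝟙 T₃.obj₃) :=
  stmt4_general φ ψ
end

section
/- Let X, Y, Z be distinguished triangles in C and let φ = (φ₁, φ₂, φ₃) : X → Y and ψ = (ψ₁, ψ₂, ψ₃) : Y → Z be morphisms of triangles. If φ is a weak isomorphism, i.e. two cyclically consecutive components of φ are isomorphisms (φ₁ and φ₂ are isomorphisms, or φ₂ and φ₃ are isomorphisms, or φ₃ and φ₁ are isomorphisms), then the mapping cone C(ψ ∘ φ) is a distinguished triangle if and only if the mapping cone C(ψ) is a distinguished triangle. -/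
open CategoryTheory CategoryTheory.Limits CategoryTheory.Pretriangulated ZeroObject

variable {C : Type*} [Category C] [Preadditive C] [HasZeroObject C] [HasBinaryBiproducts C]
  [HasShift C ℤ] [∀ n : ℤ, (shiftFunctor C n).Additive] [Pretriangulated C]

/-! Two-out-of-three for morphisms of distinguished triangles upgrades the weak isomorphism `φ` to
an isomorphism of triangles. For any `φ`, the components `φ₂ ⊕ 𝟙`, `φ₃ ⊕ 𝟙`, `φ₁⟦1⟧ ⊕ 𝟙` form a
morphism of triangles `C(ψ ∘ φ) ⟶ C(ψ)`, which is therefore an isomorphism, and distinguished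
triangles are closed under isomorphism. -/

noncomputable def triangleConeCompHom {T₁ T₂ T₃ : Triangle C} (φ : T₁ ⟶ T₂) (ψ : T₂ ⟶ T₃) :
    triangleCone (φ ≫ ψ) ⟶ triangleCone ψ :=
  Triangle.homMk _ _ (biprod.map φ.hom₂ (𝟙 _)) (biprod.map φ.hom₃ (𝟙 _))
    (biprod.map (φ.hom₁⟦(1:ℤ)⟧') (𝟙 _))
    (by dsimp [triangleCone, Triangle.mk]; ext <;> simp [φ.comm₂])
    (by dsimp [triangleCone, Triangle.mk]; ext <;> simp [φ.comm₃])
    (by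
      dsimp [triangleCone, Triangle.mk]
      ext
      · simp only [biprod.inl_desc_assoc, biprod.inl_map_assoc, biprod.inl_desc,
          ← Functor.map_comp]
        congr 1
        ext <;> simp [φ.comm₁]
      · simp [← Functor.map_comp])

instance isIso_triangleConeCompHom {T₁ T₂ T₃ : Triangle C} (φ : T₁ ⟶ T₂) (ψ : T₂ ⟶ T₃)
    [IsIso φ] :
    IsIso (triangleConeCompHom φ ψ) :=
  Triangle.isIso_of_isIsos _ (biprod.mapIso (asIso φ.hom₂) (Iso.refl _)).isIso_hom
    (biprod.mapIso (asIso φ.hom₃) (Iso.refl _)).isIso_hom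
    (biprod.mapIso (asIso (φ.hom₁⟦(1:ℤ)⟧')) (Iso.refl _)).isIso_hom

theorem stmt6_general {T₁ T₂ T₃ : Triangle C} (hT₁ : T₁ ∈ distTriang C) (hT₂ : T₂ ∈ distTriang C)
    (φ : T₁ ⟶ T₂) (ψ : T₂ ⟶ T₃)
    (hweak : (IsIso φ.hom₁ ∧ IsIso φ.hom₂) ∨ (IsIso φ.hom₂ ∧ IsIso φ.hom₃) ∨
      (IsIso φ.hom₃ ∧ IsIso φ.hom₁)) :
    (triangleCone (φ ≫ ψ) ∈ distTriang C) ↔ triangleCone ψ ∈ distTriang C := by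
  have : IsIso φ := by
    obtain ⟨h₁, h₂⟩ | ⟨h₂, h₃⟩ | ⟨h₃, h₁⟩ := hweak
    · exact Triangle.isIso_of_isIsos φ h₁ h₂ (isIso₃_of_isIso₁₂ φ hT₁ hT₂ h₁ h₂)
    · exact Triangle.isIso_of_isIsos φ (isIso₁_of_isIso₂₃ φ hT₁ hT₂ h₂ h₃) h₂ h₃
    · exact Triangle.isIso_of_isIsos φ h₁ (isIso₂_of_isIso₁₃ φ hT₁ hT₂ h₁ h₃) h₃
  exact distinguished_iff_of_iso (asIso (triangleConeCompHom φ ψ))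

/-- Given morphisms of distinguished triangles `φ : T₁ ⟶ T₂` and `ψ : T₂ ⟶ T₃`, if `φ` is a
weak isomorphism (two cyclically consecutive components of `φ` are isomorphisms), then the
mapping cone of `ψ ∘ φ` is distinguished iff the mapping cone of `ψ` is distinguished. -/
theorem stmt6 {T₁ T₂ T₃ : Triangle C} (hT₁ : T₁ ∈ distTriang C) (hT₂ : T₂ ∈ distTriang C)
    (hT₃ : T₃ ∈ distTriang C) (φ : T₁ ⟶ T₂) (ψ : T₂ ⟶ T₃)
    (hweak : (IsIso φ.hom₁ ∧ IsIso φ.hom₂) ∨ (IsIso φ.hom₂ ∧ IsIso φ.hom₃) ∨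
      (IsIso φ.hom₃ ∧ IsIso φ.hom₁)) :
    (triangleCone (φ ≫ ψ) ∈ distTriang C) ↔ triangleCone ψ ∈ distTriang C :=
  stmt6_general hT₁ hT₂ φ ψ hweak
end

section
/- Let T be a distinguished triangle in C of the form X₁ ⊕ Y₁ → X₂ ⊕ Y₂ → X₃ ⊕ Y₃ → X₁⟦1⟧ ⊕ Y₁⟦1⟧ whose three maps are lower triangular in matrix form: [[f₁, 0], [φ₁, g₁]], [[f₂, 0], [φ₂, g₂]], [[f₃, 0], [φ₃, g₃]], so that X = (X₁, X₂, X₃; f₁, f₂, f₃) and Y = (Y₁, Y₂, Y₃; g₁, g₂, g₃) are triangles. If X is contractible or Y is contractible, then T is isomorphic (as a triangle) to the direct sum X ⊕ Y (the triangle with the same objects and block-diagonal maps diag(f₁, g₁), diag(f₂, g₂), diag(f₃, g₃)). -/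
open CategoryTheory CategoryTheory.Limits CategoryTheory.Pretriangulated ZeroObject

variable {C : Type*} [Category C] [Preadditive C] [HasZeroObject C] [HasBinaryBiproducts C]
  [HasShift C ℤ] [∀ n : ℤ, (shiftFunctor C n).Additive] [Pretriangulated C]

/-!
The vanishing of the composites of consecutive maps of the distinguished triangle says that the
off-diagonal part `φ = (φ₁, φ₂, φ₃)` is a cocycle in the Hom complex from `X` to `Y`, both
viewed as 3-periodic complexes. Composing `φ` with a null-homotopy of the identity of `X` (on
the left) or of `Y` (on the right) exhibits it as a coboundary, `φᵢ = αᵢ ≫ gᵢ - fᵢ ≫ αᵢ₊₁`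
(with `α₄ = α₁⟦1⟧`), and the shear automorphisms `Biprod.unipotentUpper αᵢ` of `Xᵢ ⊞ Yᵢ`
then conjugate `T` into the block-diagonal triangle `X ⊕ Y`.
-/

namespace CategoryTheory

section Preadditive

variable {A : Type*} [Category A] [Preadditive A] [HasBinaryBiproducts A]

lemma biprod.desc_lift_lift_comp_desc {X₁ X₂ Y₁ Y₂ Z : A} (f : X₁ ⟶ Y₁) (φ : X₁ ⟶ Y₂)
    (g : X₂ ⟶ Y₂) (u : Y₁ ⟶ Z) (v : Y₂ ⟶ Z) :
    biprod.desc (biprod.lift f φ) (biprod.lift 0 g) ≫ biprod.desc u v =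
      biprod.desc (f ≫ u + φ ≫ v) (g ≫ v) := by
  ext <;> simp

lemma biprod.map_comp_desc {X₁ X₂ Y₁ Y₂ Z : A} (f : X₁ ⟶ Y₁) (g : X₂ ⟶ Y₂)
    (u : Y₁ ⟶ Z) (v : Y₂ ⟶ Z) :
    biprod.map f g ≫ biprod.desc u v = biprod.desc (f ≫ u) (g ≫ v) := by
  ext <;> simp

lemma biprod.lowerTriangular_comp_unipotentUpper_hom {X₁ X₂ Y₁ Y₂ : A}
    {f : X₁ ⟶ Y₁} {g : X₂ ⟶ Y₂} {φ : X₁ ⟶ Y₂} {α : X₁ ⟶ X₂} {β : Y₁ ⟶ Y₂}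
    (h : φ = α ≫ g - f ≫ β) :
    biprod.desc (biprod.lift f φ) (biprod.lift 0 g) ≫ (Biprod.unipotentUpper β).hom =
      (Biprod.unipotentUpper α).hom ≫ biprod.map f g := by
  ext <;> simp [Biprod.ofComponents, h]

variable {B : Type*} [Category B] [Preadditive B] [HasBinaryBiproducts B] (F : A ⥤ B)
  [F.Additive]

lemma Functor.biprod_desc_map_comp_map_unipotentUpper_hom {X Y : A} (r : X ⟶ Y) :
    biprod.desc (F.map biprod.inl) (F.map biprod.inr) ≫ F.map (Biprod.unipotentUpper r).hom =
      (Biprod.unipotentUpper (F.map r)).hom ≫ biprod.desc (F.map biprod.inl) (F.map biprod.inr) := by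
  ext
  · rw [biprod.inl_desc_assoc, ← F.map_comp, ← Category.assoc]
    simp [Biprod.inl_ofComponents]
  · rw [biprod.inr_desc_assoc, ← F.map_comp, ← Category.assoc]
    simp [Biprod.inr_ofComponents]

lemma Functor.biprod_lowerTriangular_comp_map_unipotentUpper_hom {X₁ X₂ : B} {Y₁ Y₂ : A}
    {f : X₁ ⟶ F.obj Y₁} {g : X₂ ⟶ F.obj Y₂} {φ : X₁ ⟶ F.obj Y₂} {α : X₁ ⟶ X₂} {β : Y₁ ⟶ Y₂}
    (h : φ = α ≫ g - f ≫ F.map β) :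
    biprod.desc (f ≫ F.map biprod.inl + φ ≫ F.map biprod.inr) (g ≫ F.map biprod.inr) ≫
        F.map (Biprod.unipotentUpper β).hom =
      (Biprod.unipotentUpper α).hom ≫
        biprod.desc (f ≫ F.map biprod.inl) (g ≫ F.map biprod.inr) := by
  rw [← biprod.desc_lift_lift_comp_desc, ← biprod.map_comp_desc, Category.assoc,
    F.biprod_desc_map_comp_map_unipotentUpper_hom,
    reassoc_of% (biprod.lowerTriangular_comp_unipotentUpper_hom h)]

end Preadditive

end CategoryTheory

section Triangles

noncomputable abbrev triangleTwistedSum (X Y : Triangle C) (φ₁ : X.obj₁ ⟶ Y.obj₂)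
    (φ₂ : X.obj₂ ⟶ Y.obj₃) (φ₃ : X.obj₃ ⟶ Y.obj₁⟦(1:ℤ)⟧) : Triangle C where
  obj₁ := X.obj₁ ⊞ Y.obj₁
  obj₂ := X.obj₂ ⊞ Y.obj₂
  obj₃ := X.obj₃ ⊞ Y.obj₃
  mor₁ := biprod.desc (biprod.lift X.mor₁ φ₁) (biprod.lift 0 Y.mor₁)
  mor₂ := biprod.desc (biprod.lift X.mor₂ φ₂) (biprod.lift 0 Y.mor₂)
  mor₃ := biprod.desc (X.mor₃ ≫ biprod.inl⟦(1:ℤ)⟧' + φ₃ ≫ biprod.inr⟦(1:ℤ)⟧')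
    (Y.mor₃ ≫ biprod.inr⟦(1:ℤ)⟧')

variable {X Y : Triangle C} {φ₁ : X.obj₁ ⟶ Y.obj₂} {φ₂ : X.obj₂ ⟶ Y.obj₃}
  {φ₃ : X.obj₃ ⟶ Y.obj₁⟦(1:ℤ)⟧}

structure IsTriangleCocycle (φ₁ : X.obj₁ ⟶ Y.obj₂) (φ₂ : X.obj₂ ⟶ Y.obj₃)
    (φ₃ : X.obj₃ ⟶ Y.obj₁⟦(1:ℤ)⟧) : Prop where
  comm₁ : X.mor₁ ≫ φ₂ + φ₁ ≫ Y.mor₂ = 0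
  comm₂ : X.mor₂ ≫ φ₃ + φ₂ ≫ Y.mor₃ = 0
  comm₃ : X.mor₃ ≫ φ₁⟦(1:ℤ)⟧' + φ₃ ≫ Y.mor₁⟦(1:ℤ)⟧' = 0

def IsTriangleCoboundary (φ₁ : X.obj₁ ⟶ Y.obj₂) (φ₂ : X.obj₂ ⟶ Y.obj₃)
    (φ₃ : X.obj₃ ⟶ Y.obj₁⟦(1:ℤ)⟧) : Prop :=
  ∃ (α₁ : X.obj₁ ⟶ Y.obj₁) (α₂ : X.obj₂ ⟶ Y.obj₂) (α₃ : X.obj₃ ⟶ Y.obj₃),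
    φ₁ = α₁ ≫ Y.mor₁ - X.mor₁ ≫ α₂ ∧ φ₂ = α₂ ≫ Y.mor₂ - X.mor₂ ≫ α₃ ∧
      φ₃ = α₃ ≫ Y.mor₃ - X.mor₃ ≫ α₁⟦(1:ℤ)⟧'

lemma isTriangleCocycle_of_distinguished
    (hT : triangleTwistedSum X Y φ₁ φ₂ φ₃ ∈ distTriang C) : IsTriangleCocycle φ₁ φ₂ φ₃ := by
  refine ⟨?_, ?_, ?_⟩
  · simpa using
      (biprod.inl ≫= comp_distTriang_mor_zero₁₂ _ hT) =≫ biprod.snd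
  · simpa [← Functor.map_comp] using
      (biprod.inl ≫= comp_distTriang_mor_zero₂₃ _ hT) =≫
        (biprod.snd : X.obj₁ ⊞ Y.obj₁ ⟶ Y.obj₁)⟦(1:ℤ)⟧'
  · simpa [← Functor.map_comp] using
      (biprod.inl ≫= comp_distTriang_mor_zero₃₁ _ hT) =≫
        (biprod.snd : X.obj₂ ⊞ Y.obj₂ ⟶ Y.obj₂)⟦(1:ℤ)⟧'

omit [HasZeroObject C] [Pretriangulated C] in
lemma IsTriangleCoboundary.nonempty_iso_triangleSum (hφ : IsTriangleCoboundary φ₁ φ₂ φ₃) :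
    Nonempty (triangleTwistedSum X Y φ₁ φ₂ φ₃ ≅ triangleSum X Y) := by
  obtain ⟨α₁, α₂, α₃, h₁, h₂, h₃⟩ := hφ
  exact ⟨Triangle.isoMk _ _ (Biprod.unipotentUpper α₁) (Biprod.unipotentUpper α₂)
    (Biprod.unipotentUpper α₃) (biprod.lowerTriangular_comp_unipotentUpper_hom h₁)
    (biprod.lowerTriangular_comp_unipotentUpper_hom h₂)
    ((shiftFunctor C (1:ℤ)).biprod_lowerTriangular_comp_map_unipotentUpper_hom h₃)⟩

omit [HasZeroObject C] [HasBinaryBiproducts C] [Pretriangulated C] in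
lemma IsTriangleCocycle.isTriangleCoboundary_of_contractible_left
    (hφ : IsTriangleCocycle φ₁ φ₂ φ₃) (hX : triangleContractible X) :
    IsTriangleCoboundary φ₁ φ₂ φ₃ := by
  obtain ⟨h₁, h₂, h₃, hid₂, hid₃, hid₁⟩ := hX
  have c₁ := eq_neg_of_add_eq_zero_right hφ.comm₁
  have c₂ := eq_neg_of_add_eq_zero_right hφ.comm₂
  have c₃ := eq_neg_of_add_eq_zero_right hφ.comm₃
  -- `α₁` is defined through `α₁⟦1⟧ = -(h₃ ≫ φ₃)`, the shift being fully faithful.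
  refine ⟨(shiftFunctor C (1:ℤ)).preimage (-(h₃ ≫ φ₃)), -(h₁ ≫ φ₁), -(h₂ ≫ φ₂), ?_, ?_, ?_⟩
  · apply (shiftFunctor C (1:ℤ)).map_injective
    conv_lhs => rw [← Category.id_comp (φ₁⟦(1:ℤ)⟧'), hid₁]
    simp [c₃, add_comm]
  · conv_lhs => rw [← Category.id_comp φ₂, hid₂]
    simp [c₁]
  · conv_lhs => rw [← Category.id_comp φ₃, hid₃]
    simp [c₂]

omit [HasZeroObject C] [HasBinaryBiproducts C] [∀ n : ℤ, (shiftFunctor C n).Additive]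
  [Pretriangulated C] in
lemma IsTriangleCocycle.isTriangleCoboundary_of_contractible_right
    (hφ : IsTriangleCocycle φ₁ φ₂ φ₃) (hY : triangleContractible Y) :
    IsTriangleCoboundary φ₁ φ₂ φ₃ := by
  obtain ⟨k₁, k₂, k₃, hid₂, hid₃, hid₁⟩ := hY
  have c₁ := eq_neg_of_add_eq_zero_left hφ.comm₁
  have c₂ := eq_neg_of_add_eq_zero_left hφ.comm₂
  have c₃ := eq_neg_of_add_eq_zero_left hφ.comm₃
  refine ⟨φ₁ ≫ k₁, φ₂ ≫ k₂, φ₃ ≫ k₃, ?_, ?_, ?_⟩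
  · conv_lhs => rw [← Category.comp_id φ₁, hid₂]
    simp [reassoc_of% c₁]
  · conv_lhs => rw [← Category.comp_id φ₂, hid₃]
    simp [reassoc_of% c₂]
  · conv_lhs => rw [← Category.comp_id φ₃, hid₁]
    simp [reassoc_of% c₃, add_comm]

end Triangles

/-- If `T` is a distinguished triangle on the biproducts `Xᵢ ⊞ Yᵢ` whose maps are lower
triangular with diagonal entries the maps of triangles `X = (X₁,X₂,X₃;f₁,f₂,f₃)` and
`Y = (Y₁,Y₂,Y₃;g₁,g₂,g₃)`, and `X` or `Y` is contractible, then `T` is isomorphic to the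
direct sum `X ⊕ Y`. -/
theorem stmt7 {X₁ X₂ X₃ Y₁ Y₂ Y₃ : C}
    (f₁ : X₁ ⟶ X₂) (f₂ : X₂ ⟶ X₃) (f₃ : X₃ ⟶ X₁⟦(1:ℤ)⟧)
    (g₁ : Y₁ ⟶ Y₂) (g₂ : Y₂ ⟶ Y₃) (g₃ : Y₃ ⟶ Y₁⟦(1:ℤ)⟧)
    (φ₁ : X₁ ⟶ Y₂) (φ₂ : X₂ ⟶ Y₃) (φ₃ : X₃ ⟶ Y₁⟦(1:ℤ)⟧)
    (hT : Triangle.mk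
        (biprod.desc (biprod.lift f₁ φ₁) (biprod.lift 0 g₁))
        (biprod.desc (biprod.lift f₂ φ₂) (biprod.lift 0 g₂))
        (biprod.desc
          (f₃ ≫ (biprod.inl : X₁ ⟶ X₁ ⊞ Y₁)⟦(1:ℤ)⟧' + φ₃ ≫ (biprod.inr : Y₁ ⟶ X₁ ⊞ Y₁)⟦(1:ℤ)⟧')
          (g₃ ≫ (biprod.inr : Y₁ ⟶ X₁ ⊞ Y₁)⟦(1:ℤ)⟧')) ∈ distTriang C)
    (hcontr : triangleContractible (Triangle.mk f₁ f₂ f₃) ∨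
      triangleContractible (Triangle.mk g₁ g₂ g₃)) :
    Nonempty (Triangle.mk
        (biprod.desc (biprod.lift f₁ φ₁) (biprod.lift 0 g₁))
        (biprod.desc (biprod.lift f₂ φ₂) (biprod.lift 0 g₂))
        (biprod.desc
          (f₃ ≫ (biprod.inl : X₁ ⟶ X₁ ⊞ Y₁)⟦(1:ℤ)⟧' + φ₃ ≫ (biprod.inr : Y₁ ⟶ X₁ ⊞ Y₁)⟦(1:ℤ)⟧')
          (g₃ ≫ (biprod.inr : Y₁ ⟶ X₁ ⊞ Y₁)⟦(1:ℤ)⟧')) ≅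
      triangleSum (Triangle.mk f₁ f₂ f₃) (Triangle.mk g₁ g₂ g₃)) := by
  have hφ : IsTriangleCocycle (X := Triangle.mk f₁ f₂ f₃) (Y := Triangle.mk g₁ g₂ g₃) φ₁ φ₂ φ₃ :=
    isTriangleCocycle_of_distinguished hT
  exact (hcontr.elim hφ.isTriangleCoboundary_of_contractible_left
    hφ.isTriangleCoboundary_of_contractible_right).nonempty_iso_triangleSum
end
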